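/- arXiv:0808.0431 — 2 statements merged into one kernel-verified Lean document; each statement's English description precedes it below -/
import Mathlib

section
/- Let g = ⊕_{i∈ℤ} g^i be a finite-dimensional ℤ-graded semisimple Lie algebra over a field of characteristic zero. Then every minimal (simple) ideal I of g is a graded ideal, i.e. I = Σ_{i∈ℤ} (I ∩ g^i). Consequently, every graded semisimple Lie algebra is a direct sum of graded simple Lie algebras. -/
/-! The grading defines a derivation `D` of `L` acting as multiplication by `i` on `gⁱ`.
In characteristic zero a semisimple Lie algebra has nondegenerate Killing form, so every
derivation is inner: `D = ad z`, and every ideal is `D`-stable. A `D`-stable subspace contains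
the homogeneous components of its elements, because the `i`-th component of `x` is `p(D) x`
for the Lagrange polynomial `p` with `p(i) = 1` vanishing at the other degrees occurring in `x`;
the integers are distinct in `K` since the characteristic is zero. -/

open DirectSum Polynomial

section

variable {ι K V : Type*} [Field K] [AddCommGroup V] [Module K V]
  {𝒢 : ι → Submodule K V} {f : Module.End K V} {c : ι → K}

theorem aeval_apply_of_forall_mem_eq_smul (hf : ∀ i, ∀ x ∈ 𝒢 i, f x = c i • x)
    {i : ι} {x : V} (hx : x ∈ 𝒢 i) (q : K[X]) : aeval f q x = q.eval (c i) • x := by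
  rcases eq_or_ne x 0 with rfl | hx₀
  · simp
  · exact Module.End.aeval_apply_of_hasEigenvector
      ⟨Module.End.mem_eigenspace_iff.mpr (hf i x hx), hx₀⟩

namespace Submodule

theorem decompose_mem_of_le_comap [DecidableEq ι] [Decomposition 𝒢]
    (hc : Function.Injective c) (hf : ∀ i, ∀ x ∈ 𝒢 i, f x = c i • x)
    {p : Submodule K V} (hp : p ≤ p.comap f) {x : V} (hx : x ∈ p) (i : ι) :
    (decompose 𝒢 x i : V) ∈ p := by
  classical
  set s := (decompose 𝒢 x).support
  by_cases hi : i ∈ s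
  · have hproj : aeval f (Lagrange.basis s c i) x = decompose 𝒢 x i := by
      conv_lhs => rw [← sum_support_decompose 𝒢 x]
      rw [map_sum, Finset.sum_eq_single_of_mem i hi]
      · rw [aeval_apply_of_forall_mem_eq_smul hf (decompose 𝒢 x i).2,
          Lagrange.eval_basis_self hc.injOn hi, one_smul]
      · intro j hj hji
        rw [aeval_apply_of_forall_mem_eq_smul hf (decompose 𝒢 x j).2,
          Lagrange.eval_basis_of_ne hji.symm hj, zero_smul]
    rw [← hproj]
    exact aeval_apply_smul_mem_of_le_comap hx _ f hp
  · rw [DFinsupp.notMem_support_iff.mp hi]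
    exact p.zero_mem

theorem eq_iSup_inf_of_le_comap [DecidableEq ι] (h𝒢 : IsInternal 𝒢)
    (hc : Function.Injective c) (hf : ∀ i, ∀ x ∈ 𝒢 i, f x = c i • x)
    {p : Submodule K V} (hp : p ≤ p.comap f) :
    p = ⨆ i, p ⊓ 𝒢 i := by
  classical
  let := h𝒢.chooseDecomposition
  refine le_antisymm (fun x hx => ?_) (iSup_le fun i => inf_le_left)
  rw [← sum_support_decompose 𝒢 x]
  exact sum_mem fun i _ => mem_iSup_of_mem i
    ⟨decompose_mem_of_le_comap hc hf hp hx i, (decompose 𝒢 x i).2⟩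

end Submodule

end

namespace DirectSum.IsInternal

section

variable {ι K V : Type*} [DecidableEq ι] [CommRing K] [AddCommGroup V] [Module K V]
  {𝒢 : ι → Submodule K V}

noncomputable def weightEnd (h𝒢 : IsInternal 𝒢) (c : ι → K) : Module.End K V :=
  toModule K ι V (fun i => c i • (𝒢 i).subtype) ∘ₗ
    (LinearEquiv.ofBijective (coeLinearMap 𝒢) h𝒢).symm.toLinearMap

theorem weightEnd_apply_of_mem (h𝒢 : IsInternal 𝒢) (c : ι → K) {i : ι} {x : V}
    (hx : x ∈ 𝒢 i) : h𝒢.weightEnd c x = c i • x := by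
  have : (LinearEquiv.ofBijective (coeLinearMap 𝒢) h𝒢).symm x = lof K ι _ i ⟨x, hx⟩ := by
    rw [LinearEquiv.symm_apply_eq]
    exact (coeLinearMap_of 𝒢 i ⟨x, hx⟩).symm
  simp [weightEnd, this]

end

variable {K L : Type*} [Field K] [LieRing L] [LieAlgebra K L] {g : ℤ → Submodule K L}

noncomputable def gradingDerivation (hg : IsInternal g)
    (hbracket : ∀ i j : ℤ, ∀ x ∈ g i, ∀ y ∈ g j, ⁅x, y⁆ ∈ g (i + j)) :
    LieDerivation K L L where
  __ := hg.weightEnd (Int.cast : ℤ → K)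
  leibniz' a b := by
    have hmem : ∀ x : L, x ∈ ⨆ i, g i := fun x => hg.submodule_iSup_eq_top ▸ Submodule.mem_top
    induction hmem a using Submodule.iSup_induction' with
    | mem i a ha =>
      induction hmem b using Submodule.iSup_induction' with
      | mem j b hb =>
        simp only [hg.weightEnd_apply_of_mem _ ha, hg.weightEnd_apply_of_mem _ hb,
          hg.weightEnd_apply_of_mem _ (hbracket i j a ha b hb), lie_smul, ← lie_skew b a]
        push_cast
        module
      | zero => simp
      | add b₁ b₂ _ _ h₁ h₂ => simp only [lie_add, add_lie, map_add, h₁, h₂]; abel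
    | zero => simp
    | add a₁ a₂ _ _ h₁ h₂ => simp only [lie_add, add_lie, map_add, h₁, h₂]; abel

theorem gradingDerivation_apply_of_mem (hg : IsInternal g)
    (hbracket : ∀ i j : ℤ, ∀ x ∈ g i, ∀ y ∈ g j, ⁅x, y⁆ ∈ g (i + j)) {i : ℤ} {x : L}
    (hx : x ∈ g i) : hg.gradingDerivation hbracket x = (i : K) • x :=
  hg.weightEnd_apply_of_mem _ hx

end DirectSum.IsInternal

theorem LieIdeal.eq_iSup_inf_of_isInternal {K L : Type*} [Field K] [CharZero K] [LieRing L]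
    [LieAlgebra K L] [FiniteDimensional K L] [LieAlgebra.IsKilling K L]
    {g : ℤ → Submodule K L} (hg : IsInternal g)
    (hbracket : ∀ i j : ℤ, ∀ x ∈ g i, ∀ y ∈ g j, ⁅x, y⁆ ∈ g (i + j)) (I : LieIdeal K L) :
    (I : Submodule K L) = ⨆ i, (I : Submodule K L) ⊓ g i := by
  obtain ⟨z, hz⟩ := LieDerivation.IsKilling.exists_eq_ad (hg.gradingDerivation hbracket)
  refine Submodule.eq_iSup_inf_of_le_comap hg Int.cast_injective
    (fun i x hx => hg.gradingDerivation_apply_of_mem hbracket hx) (fun x hx => ?_)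
  rw [Submodule.mem_comap, ← hz, LieDerivation.coe_ad_apply_eq_ad_apply, LieAlgebra.ad_apply]
  exact I.lie_mem hx

theorem LieAlgebra.IsSemisimple.isInternal_atoms {R L : Type*} [CommRing R] [LieRing L]
    [LieAlgebra R L] [IsSemisimple R L] [DecidableEq {J : LieIdeal R L // IsAtom J}] :
    IsInternal fun J : {J : LieIdeal R L // IsAtom J} => ((J : LieIdeal R L) : Submodule R L) := by
  rw [isInternal_submodule_iff_iSupIndep_and_iSup_eq_top]
  exact ⟨LieSubmodule.iSupIndep_toSubmodule.mpr ((sSupIndep_iff _).mp sSupIndep_isAtom),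
    LieSubmodule.iSup_toSubmodule_eq_top.mpr ((sSup_eq_iSup' _).symm.trans sSup_atoms_eq_top)⟩

open scoped Classical in
/-- In a finite-dimensional ℤ-graded semisimple Lie algebra over a field
of characteristic zero, every minimal (simple) ideal `I` is graded:
`I = Σᵢ (I ∩ gⁱ)`.  Consequently `g` is the direct sum of its (graded simple) minimal
ideals. -/
theorem minimal_ideal_is_graded
    {K L : Type*} [Field K] [CharZero K] [LieRing L] [LieAlgebra K L]
    [FiniteDimensional K L] [LieAlgebra.IsSemisimple K L]
    (g : ℤ → Submodule K L)
    (hg : DirectSum.IsInternal g)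
    (hbracket : ∀ i j : ℤ, ∀ x ∈ g i, ∀ y ∈ g j, ⁅x, y⁆ ∈ g (i + j)) :
    (∀ I : LieIdeal K L, IsAtom I →
      (I : Submodule K L) = ⨆ i : ℤ, (I : Submodule K L) ⊓ g i) ∧
    DirectSum.IsInternal
      (fun J : {J : LieIdeal K L // IsAtom J} => ((J : LieIdeal K L) : Submodule K L)) :=
  ⟨fun I _ => LieIdeal.eq_iSup_inf_of_isInternal hg hbracket I,
    LieAlgebra.IsSemisimple.isInternal_atoms⟩
end

section
/- Realize the root system B_ℓ in ℝ^ℓ (ℓ ≥ 2) with simple roots α_h = e_h − e_{h+1} (1 ≤ h ≤ ℓ−1), α_ℓ = e_ℓ. Let Π¹ = {α_{i_1}, …, α_{i_k}} with i_1 < ⋯ < i_k and k ≥ 2. Then Π¹ is admissible if and only if i_k = i_{k−1} + 1. -/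
/-!
Pairing with the coweight `ω_p = e_1 + ⋯ + e_p` reads off the coefficient of `α_p`, so the
vector `2 α_a + Σ k_h α_h` has coefficients `2` at `a`, `0` on the rest of `Π¹` and `k_h ≥ 0`
elsewhere. The only roots of `B_ℓ` with a coefficient `2` are `e_i + e_j` with `i < j`, whose
coefficient at `p` is `[i ≤ p] + [j ≤ p]`. Being nondecreasing in `p`, it can vanish at the other
elements of `Π¹` and equal `2` at `a` only if `a = i_k` and `i_{k-1} < i < j ≤ i_k`; conversely
`e_{i_{k-1}+1} + e_{i_{k-1}+2}` is such a root as soon as `i_k ≥ i_{k-1} + 2`.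
-/

open Finset

/-- The paper's admissibility, without its requirement `2 ≤ #S`. -/
def IsAdmissible {ι V : Type*} [Fintype ι] [AddCommGroup V] [Module ℝ V]
    (α : ι → V) (R : Set V) (S : Finset ι) : Prop :=
  ¬ ∃ a ∈ S, ∃ k : ι → ℕ, (∀ h, k h ≠ 0 → h ∉ S) ∧ (2 : ℝ) • α a + ∑ h, (k h : ℝ) • α h ∈ R

section PartialSum

variable {ι : Type*} [PartialOrder ι] [LocallyFiniteOrderBot ι]

/-- Pairing with the coweight `e_1 + ⋯ + e_p`; for `B_ℓ` these form the basis dual to the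
simple roots. -/
def partialSum (p : ι) : (ι → ℝ) →ₗ[ℝ] ℝ := ∑ q ∈ Iic p, LinearMap.proj q

theorem partialSum_apply (p : ι) (v : ι → ℝ) : partialSum p v = ∑ q ∈ Iic p, v q := by
  simp [partialSum]

theorem partialSum_single [DecidableEq ι] [DecidableLE ι] (p i : ι) :
    partialSum p (Pi.single i 1) = if i ≤ p then 1 else 0 := by
  simp [partialSum_apply, sum_pi_single']

theorem eq_of_forall_partialSum_eq [WellFoundedLT ι] {v w : ι → ℝ}
    (h : ∀ p, partialSum p v = partialSum p w) : v = w := by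
  classical
  funext p
  induction p using WellFoundedLT.induction with
  | _ p ih =>
    have hp := h p
    rw [partialSum_apply, partialSum_apply, ← Iio_insert, sum_insert notMem_Iio_self,
      sum_insert notMem_Iio_self, sum_congr rfl fun q hq => ih q (mem_Iio.1 hq)] at hp
    linarith

end PartialSum

section RootSystemB

variable {ℓ : ℕ}

variable (ℓ) in
def simpleRootB (h : Fin ℓ) : Fin ℓ → ℝ :=
  Pi.single h 1 - if hh : (h : ℕ) + 1 < ℓ then Pi.single ⟨h + 1, hh⟩ 1 else 0

variable (ℓ) in
def rootsB : Set (Fin ℓ → ℝ) :=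
  {v | (∃ i j : Fin ℓ, i ≠ j ∧ v = Pi.single i 1 - Pi.single j 1) ∨
    (∃ i j : Fin ℓ, i < j ∧
      (v = Pi.single i 1 + Pi.single j 1 ∨ v = -(Pi.single i 1 + Pi.single j 1))) ∨
    (∃ i : Fin ℓ, v = Pi.single i 1 ∨ v = -Pi.single i 1)}

theorem partialSum_simpleRootB (p h : Fin ℓ) :
    partialSum p (simpleRootB ℓ h) = if h = p then 1 else 0 := by
  by_cases hh : (h : ℕ) + 1 < ℓ
  · rw [simpleRootB, dif_pos hh, map_sub, partialSum_single, partialSum_single]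
    simp only [Fin.le_def, Fin.ext_iff]
    split_ifs <;> norm_num <;> omega
  · rw [simpleRootB, dif_neg hh, sub_zero, partialSum_single]
    simp only [Fin.le_def, Fin.ext_iff]
    have := p.isLt
    split_ifs <;> first | rfl | omega

theorem partialSum_smul_simpleRootB_add_sum (c : ℝ) (a : Fin ℓ) (k : Fin ℓ → ℝ) (p : Fin ℓ) :
    partialSum p (c • simpleRootB ℓ a + ∑ h, k h • simpleRootB ℓ h) =
      (if a = p then c else 0) + k p := by
  simp [map_sum, partialSum_simpleRootB]

theorem exists_eq_single_add_single_of_partialSum_eq_two {v : Fin ℓ → ℝ} (hv : v ∈ rootsB ℓ)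
    {p : Fin ℓ} (hp : partialSum p v = 2) :
    ∃ i j, i < j ∧ j ≤ p ∧ v = Pi.single i 1 + Pi.single j 1 := by
  rcases hv with ⟨i, j, -, rfl⟩ | ⟨i, j, hij, rfl | rfl⟩ | ⟨i, rfl | rfl⟩
  pick_goal 2
  · refine ⟨i, j, hij, ?_, rfl⟩
    by_contra hjp
    rw [map_add, partialSum_single, partialSum_single, if_neg hjp] at hp
    split_ifs at hp <;> norm_num at hp
  all_goals
    simp only [map_sub, map_add, map_neg, partialSum_single] at hp
    split_ifs at hp <;> norm_num at hp

variable {S : Finset (Fin ℓ)} {b m : Fin ℓ}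

theorem not_isAdmissible_simpleRootB_of_add_two_le (hm : m ∈ S) (hS : ∀ s ∈ S, s ≤ b ∨ s = m)
    (hbm : (b : ℕ) + 2 ≤ m) : ¬ IsAdmissible (simpleRootB ℓ) (rootsB ℓ) S := by
  let i : Fin ℓ := ⟨b + 1, by omega⟩
  let j : Fin ℓ := ⟨b + 2, by omega⟩
  -- the coefficients of `e_i + e_j`, with `2` removed at `m`
  let kf : Fin ℓ → ℕ := fun h => if h ≤ b then 0 else if h = i then 1 else if h = m then 0 else 2
  have hkf : ∀ h, kf h ≠ 0 → h ∉ S := by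
    intro h hh hS'
    rcases hS h hS' with hb | rfl
    · exact hh (if_pos hb)
    · simp only [kf, i, Fin.le_def, Fin.ext_iff] at hh
      split_ifs at hh <;> omega
  have hroot : (2 : ℝ) • simpleRootB ℓ m + ∑ h, (kf h : ℝ) • simpleRootB ℓ h =
      Pi.single i 1 + Pi.single j 1 := by
    refine eq_of_forall_partialSum_eq fun p => ?_
    rw [partialSum_smul_simpleRootB_add_sum, map_add, partialSum_single, partialSum_single]
    simp only [kf, i, j, Fin.le_def, Fin.ext_iff]
    split_ifs <;> norm_num <;> omega
  rw [IsAdmissible, not_not]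
  exact ⟨m, hm, kf, hkf, hroot ▸ Or.inr (Or.inl ⟨i, j, by simp [i, j, Fin.lt_def], Or.inl rfl⟩)⟩

theorem add_two_le_of_not_isAdmissible_simpleRootB (hb : b ∈ S) (hm : m ∈ S) (hbm : b < m)
    (hS : ∀ s ∈ S, s ≤ m) (h : ¬ IsAdmissible (simpleRootB ℓ) (rootsB ℓ) S) :
    (b : ℕ) + 2 ≤ m := by
  obtain ⟨a, ha, kf, hkf, hroot⟩ := not_not.1 h
  have hcoeff := partialSum_smul_simpleRootB_add_sum 2 a (fun h => (kf h : ℝ))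
  have hzero : ∀ s ∈ S, kf s = 0 := fun s hs => by_contra fun h => hkf s h hs
  obtain ⟨i, j, hij, hja, hv⟩ := exists_eq_single_add_single_of_partialSum_eq_two hroot
    (p := a) (by rw [hcoeff, if_pos rfl, hzero a ha]; norm_num)
  simp only [hv, map_add, partialSum_single] at hcoeff
  obtain rfl : a = m := by
    by_contra ham
    have hcm := hcoeff m
    rw [if_neg ham, hzero m hm, if_pos (hij.le.trans (hja.trans (hS a ha))),
      if_pos (hja.trans (hS a ha))] at hcm
    norm_num at hcm
  have hcb := hcoeff b
  rw [if_neg hbm.ne', hzero b hb] at hcb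
  simp only [Fin.le_def, Fin.lt_def] at hcb hij hja
  split_ifs at hcb <;> norm_num at hcb
  omega

theorem isAdmissible_simpleRootB_iff (hb : b ∈ S) (hm : m ∈ S) (hbm : b < m)
    (hS : ∀ s ∈ S, s ≤ b ∨ s = m) :
    IsAdmissible (simpleRootB ℓ) (rootsB ℓ) S ↔ (m : ℕ) = b + 1 := by
  have hle : ∀ s ∈ S, s ≤ m := fun s hs => (hS s hs).elim (fun h => h.trans hbm.le) le_of_eq
  refine ⟨fun h => ?_, fun h => ?_⟩
  · by_contra hne
    exact not_isAdmissible_simpleRootB_of_add_two_le hm hS (by rw [Fin.lt_def] at hbm; omega) h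
  · by_contra hna
    have := add_two_le_of_not_isAdmissible_simpleRootB hb hm hbm hle hna
    omega

end RootSystemB

/-- In the root system `B_ℓ` with simple roots
`α_h = e_h - e_{h+1}` (`h < ℓ`), `α_ℓ = e_ℓ`, a subset
`Π¹ = {α_{i_1}, …, α_{i_k}}` (`i_1 < ⋯ < i_k`, `k ≥ 2`) is admissible (no root has
the form `2α + Σ k_i φ_i` with `α ∈ Π¹`, `φ_i ∈ Π \ Π¹`, `k_i ∈ ℕ`) iff
`i_k = i_{k-1} + 1`. -/
theorem B_ell_admissible_iff
    (ℓ : ℕ) (hℓ : 2 ≤ ℓ)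
    (e : Fin ℓ → (Fin ℓ → ℝ))
    (he : ∀ i, e i = Pi.single i 1)
    (α : Fin ℓ → (Fin ℓ → ℝ))
    (hα : ∀ (h : Fin ℓ) (hh : (h : ℕ) + 1 < ℓ), α h = e h - e ⟨(h : ℕ) + 1, hh⟩)
    (hαlast : α ⟨ℓ - 1, by omega⟩ = e ⟨ℓ - 1, by omega⟩)
    (R : Set (Fin ℓ → ℝ))
    (hR : R = {v | (∃ i j : Fin ℓ, i ≠ j ∧ v = e i - e j) ∨
        (∃ i j : Fin ℓ, i < j ∧ (v = e i + e j ∨ v = -(e i + e j))) ∨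
        (∃ i : Fin ℓ, v = e i ∨ v = -(e i))})
    (k : ℕ) (hk : 2 ≤ k)
    (idx : Fin k → Fin ℓ) (hidx : StrictMono idx)
    (Pi1 : Finset (Fin ℓ)) (hPi1 : ∀ h, h ∈ Pi1 ↔ ∃ t, idx t = h) :
    (¬ ∃ a ∈ Pi1, ∃ kf : Fin ℓ → ℕ, (∀ h, kf h ≠ 0 → h ∉ Pi1) ∧
        ((2 : ℝ) • α a + ∑ h, (kf h : ℝ) • α h) ∈ R) ↔
      (idx ⟨k - 1, by omega⟩ : ℕ) = (idx ⟨k - 2, by omega⟩ : ℕ) + 1 := by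
  obtain rfl : e = fun i => Pi.single i 1 := funext he
  subst hR
  obtain rfl : α = simpleRootB ℓ := by
    funext h
    by_cases hh : (h : ℕ) + 1 < ℓ
    · simp [simpleRootB, hh, hα h hh]
    · rw [show h = ⟨ℓ - 1, by omega⟩ from Fin.ext (by simp; omega), hαlast]
      simp [simpleRootB, show ¬ ℓ - 1 + 1 < ℓ by omega]
  change IsAdmissible (simpleRootB ℓ) (rootsB ℓ) Pi1 ↔ _
  have hlt : (⟨k - 2, by omega⟩ : Fin k) < ⟨k - 1, by omega⟩ := Fin.mk_lt_mk.2 (by omega)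
  refine isAdmissible_simpleRootB_iff ((hPi1 _).2 ⟨_, rfl⟩) ((hPi1 _).2 ⟨_, rfl⟩) (hidx hlt) ?_
  intro s hs
  obtain ⟨t, rfl⟩ := (hPi1 s).1 hs
  rcases eq_or_ne (t : ℕ) (k - 1) with ht | ht
  · exact Or.inr (congrArg idx (Fin.ext ht))
  · exact Or.inl (hidx.monotone (Fin.mk_le_mk.2 (by omega)))
end
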